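/- Under the Volterra equation hypotheses, the following are equivalent: (a) H(n) → ∞ and H is asymptotic to some increasing sequence; (b) x(n) → ∞ and x is asymptotic to some increasing sequence. Moreover, either statement implies lim_{n→∞} x(n)/H(n) = 1. -/

import Mathlib

/-!
Write `K = ∑ |k j|` and `M_g n = max_{j ≤ n} |g j|`. Since `f` is continuous and sublinear,
`|f y| ≤ ε |y| + C_ε` for every `ε > 0`, so the Volterra equation gives
`|x (n+1) - H (n+1)| ≤ K (ε M_x n + C_ε)`. Taking `K ε ≤ 1/2` yields the a priori bound
`M_x ≤ D + 2 M_H`. A sequence `u` tending to infinity and asymptotic to a monotone sequence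
satisfies `M_u = O(u)`; so under (a) (`u = H`) or (b) (`u = x`) we get `M_x = O(u)`, and then
the estimate with `ε → 0` gives `x - H = o(u)`, i.e. `x ~ H`. Asymptotic equivalence transports
both divergence to infinity and asymptotic equivalence to a monotone sequence.
-/

open Filter Finset Topology

/-- Running maximum of `g` over `{1,…,n}` (value `0` when `n = 0`). -/
noncomputable def runMax1 (g : ℕ → ℝ) (n : ℕ) : ℝ :=
  if h : 1 ≤ n then (Finset.Icc 1 n).sup' (Finset.nonempty_Icc.mpr h) g else 0

/-- Running maximum of `g` over `{0,…,n}`. -/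
noncomputable def runMax0 (g : ℕ → ℝ) (n : ℕ) : ℝ :=
  (Finset.Icc 0 n).sup' (Finset.nonempty_Icc.mpr (Nat.zero_le n)) g

open Asymptotics

theorem le_runMax0 (g : ℕ → ℝ) {j n : ℕ} (h : j ≤ n) : g j ≤ runMax0 g n :=
  le_sup' g (mem_Icc.mpr ⟨j.zero_le, h⟩)

theorem runMax0_le {g : ℕ → ℝ} {n : ℕ} {a : ℝ} (h : ∀ j ≤ n, g j ≤ a) : runMax0 g n ≤ a :=
  sup'_le _ _ fun j hj => h j (mem_Icc.mp hj).2

theorem runMax0_mono (g : ℕ → ℝ) : Monotone (runMax0 g) :=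
  fun _ _ hmn => runMax0_le fun _ hj => le_runMax0 g (hj.trans hmn)

theorem runMax0_abs_nonneg (g : ℕ → ℝ) (n : ℕ) : 0 ≤ runMax0 (|g ·|) n :=
  (abs_nonneg _).trans (le_runMax0 (|g ·|) n.zero_le)

theorem exists_abs_le_mul_abs_add {f : ℝ → ℝ} (hf : Continuous f)
    (hsub : Tendsto (fun y => f y / y) (cocompact ℝ) (𝓝 0)) {ε : ℝ} (hε : 0 < ε) :
    ∃ C, ∀ y, |f y| ≤ ε * |y| + C := by
  have hev : ∀ᶠ y in cocompact ℝ, |f y| / |y| < ε := by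
    simpa [Real.dist_eq, abs_div] using Metric.tendsto_nhds.mp hsub ε hε
  obtain ⟨t, ht, hts⟩ := mem_cocompact.mp hev
  -- `0` is added to the compact set because `f 0 / 0 = 0` carries no information on `f 0`.
  obtain ⟨C, hC⟩ := (ht.insert 0).exists_bound_of_continuousOn hf.continuousOn
  refine ⟨C, fun y => ?_⟩
  by_cases hy : y ∈ insert 0 t
  · have := hC y hy
    rw [Real.norm_eq_abs] at this
    linarith [mul_nonneg hε.le (abs_nonneg y)]
  · have hy0 : y ≠ 0 := fun h => hy (h ▸ Set.mem_insert 0 t)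
    calc |f y| = |f y| / |y| * |y| := (div_mul_cancel₀ _ (abs_ne_zero.mpr hy0)).symm
      _ ≤ ε * |y| := by gcongr; exact (hts fun h => hy (Set.mem_insert_of_mem 0 h)).le
      _ ≤ ε * |y| + C :=
        le_add_of_nonneg_right ((abs_nonneg _).trans (by simpa using hC 0 (by simp)))

theorem abs_sum_range_mul_le_tsum_mul {k g : ℕ → ℝ} (hk : Summable fun j => |k j|) {B : ℝ}
    (n : ℕ) (hg : ∀ j ≤ n, |g j| ≤ B) :
    |∑ j ∈ range (n + 1), k (n - j) * g j| ≤ (∑' j, |k j|) * B :=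
  calc |∑ j ∈ range (n + 1), k (n - j) * g j|
      ≤ ∑ j ∈ range (n + 1), |k (n - j)| * B := (abs_sum_le_sum_abs _ _).trans <|
        sum_le_sum fun j hj => by
          rw [abs_mul]
          gcongr
          exact hg j (Nat.lt_succ_iff.mp (mem_range.mp hj))
    _ = (∑ j ∈ range (n + 1), |k j|) * B := by
        rw [← sum_mul, ← sum_range_reflect (fun j => |k j|)]
        simp
    _ ≤ (∑' j, |k j|) * B := mul_le_mul_of_nonneg_right
        (hk.sum_le_tsum _ fun _ _ => abs_nonneg _) ((abs_nonneg _).trans (hg 0 n.zero_le))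

theorem isLittleO_of_forall_le_mul_add {α E F : Type*} [NormedAddCommGroup E]
    [NormedAddCommGroup F] {l : Filter α} {r : α → E} {u : α → F}
    (hu : Tendsto (fun a => ‖u a‖) l atTop)
    (h : ∀ ε > 0, ∃ C, ∀ᶠ a in l, ‖r a‖ ≤ ε * ‖u a‖ + C) : r =o[l] u := by
  refine IsLittleO.of_bound fun c hc => ?_
  obtain ⟨C, hC⟩ := h (c / 2) (half_pos hc)
  filter_upwards [hC, hu.eventually_ge_atTop (2 * C / c)] with a hr hua
  have := (div_le_iff₀ hc).mp hua
  linarith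

theorem isBigO_runMax0_abs {g b : ℕ → ℝ} (hb : Monotone b) (hgb : g ~[atTop] b)
    (hg : Tendsto g atTop atTop) : runMax0 (|g ·|) =O[atTop] g := by
  obtain ⟨c, hc, hgbc⟩ := hgb.isBigO.exists_pos
  obtain ⟨N, hN⟩ := eventually_atTop.mp
    (hgbc.bound.and ((hgb.tendsto_atTop hg).eventually_ge_atTop 0))
  have hle : ∀ n ≥ N, runMax0 (|g ·|) n ≤ runMax0 (|g ·|) N + c * b n := fun n hn =>
    runMax0_le fun j hj => by
      rcases le_total j N with hjN | hNj
      · exact (le_runMax0 (|g ·|) hjN).trans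
          (le_add_of_nonneg_right (mul_nonneg hc.le (hN n hn).2))
      · obtain ⟨hgj, hbj⟩ := hN j hNj
        rw [Real.norm_eq_abs, Real.norm_of_nonneg hbj] at hgj
        calc |g j| ≤ c * b n := hgj.trans (mul_le_mul_of_nonneg_left (hb hj) hc.le)
          _ ≤ runMax0 (|g ·|) N + c * b n := le_add_of_nonneg_left (runMax0_abs_nonneg g N)
  have hO : runMax0 (|g ·|) =O[atTop] fun n => runMax0 (|g ·|) N + c * b n :=
    IsBigO.of_bound' <| (eventually_ge_atTop N).mono fun n hn => by
      rw [Real.norm_of_nonneg (runMax0_abs_nonneg g n), Real.norm_eq_abs]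
      exact (hle n hn).trans (le_abs_self _)
  exact hO.trans <|
    (isLittleO_const_left.2 (Or.inr (tendsto_norm_atTop_atTop.comp hg))).isBigO.add
      (hgb.isBigO_symm.const_mul_left c)

def AsymptoticToMonotone (g : ℕ → ℝ) : Prop :=
  ∃ b : ℕ → ℝ, Monotone b ∧ Tendsto (fun n => g n / b n) atTop (𝓝 1)

theorem Asymptotics.IsEquivalent.tendsto_atTop_and_asymptoticToMonotone {u v : ℕ → ℝ}
    (huv : u ~[atTop] v)
    (hu : Tendsto u atTop atTop ∧ AsymptoticToMonotone u) :
    Tendsto v atTop atTop ∧ AsymptoticToMonotone v := by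
  obtain ⟨hutop, b, hb, hub⟩ := hu
  have hvtop := huv.tendsto_atTop hutop
  have hvb : v ~[atTop] b := huv.symm.trans (isEquivalent_of_tendsto_one hub)
  have hb0 : ∀ᶠ n in atTop, b n ≠ 0 :=
    ((hvb.tendsto_atTop hvtop).eventually_gt_atTop 0).mono fun _ h => h.ne'
  exact ⟨hvtop, b, hb, (isEquivalent_iff_tendsto_one hb0).mp hvb⟩

section Volterra

variable {f : ℝ → ℝ} {k H x : ℕ → ℝ}

theorem abs_sub_forcing_le (hk : Summable fun j => |k j|)
    (hx : ∀ n : ℕ, x (n + 1) = H (n + 1) + ∑ j ∈ range (n + 1), k (n - j) * f (x j))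
    {ε C : ℝ} (hε : 0 ≤ ε) (hfC : ∀ y, |f y| ≤ ε * |y| + C) (n : ℕ) :
    |x (n + 1) - H (n + 1)| ≤ (∑' j, |k j|) * (ε * runMax0 (|x ·|) n + C) := by
  rw [hx n, add_sub_cancel_left]
  exact abs_sum_range_mul_le_tsum_mul hk n fun j hj =>
    (hfC _).trans (by gcongr; exact le_runMax0 (|x ·|) hj)

theorem exists_runMax0_abs_le (hf : Continuous f)
    (hsub : Tendsto (fun y => f y / y) (cocompact ℝ) (𝓝 0)) (hk : Summable fun j => |k j|)
    (hx : ∀ n : ℕ, x (n + 1) = H (n + 1) + ∑ j ∈ range (n + 1), k (n - j) * f (x j)) :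
    ∃ D, ∀ n, runMax0 (|x ·|) n ≤ D + 2 * runMax0 (|H ·|) n := by
  set K := ∑' j, |k j|
  have hK : 0 ≤ K := tsum_nonneg fun _ => abs_nonneg _
  set ε := 1 / (2 * (K + 1))
  have hε : 0 < ε := by positivity
  have hKε : K * ε ≤ 1 / 2 := by
    rw [mul_one_div, div_le_iff₀ (by positivity)]
    linarith
  obtain ⟨C, hC⟩ := exists_abs_le_mul_abs_add hf hsub hε
  have hC0 : 0 ≤ C := (abs_nonneg _).trans (by simpa using hC 0)
  refine ⟨2 * (|x 0| + K * C), fun n => ?_⟩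
  induction n with
  | zero =>
    refine runMax0_le fun j hj => ?_
    rw [Nat.le_zero.mp hj]
    linarith [runMax0_abs_nonneg H 0, mul_nonneg hK hC0, abs_nonneg (x 0)]
  | succ n ih =>
    have hMH : runMax0 (|H ·|) n ≤ runMax0 (|H ·|) (n + 1) := runMax0_mono _ n.le_succ
    refine runMax0_le fun j hj => ?_
    rcases Nat.le_succ_iff.mp hj with hjn | rfl
    · linarith [le_runMax0 (|x ·|) hjn]
    · have hstep : |x (n + 1) - H (n + 1)| ≤ K * ε * runMax0 (|x ·|) n + K * C := by
        simpa only [mul_add, mul_assoc] using abs_sub_forcing_le hk hx hε.le hC n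
      have hKεM : K * ε * runMax0 (|x ·|) n ≤ runMax0 (|x ·|) n / 2 := by
        nlinarith [runMax0_abs_nonneg x n]
      have hHn : |H (n + 1)| ≤ runMax0 (|H ·|) (n + 1) := le_runMax0 (|H ·|) le_rfl
      have := abs_sub_abs_le_abs_sub (x (n + 1)) (H (n + 1))
      show |x (n + 1)| ≤ _
      linarith [abs_nonneg (x 0)]

theorem isLittleO_sub_forcing (hf : Continuous f)
    (hsub : Tendsto (fun y => f y / y) (cocompact ℝ) (𝓝 0)) (hk : Summable fun j => |k j|)
    (hx : ∀ n : ℕ, x (n + 1) = H (n + 1) + ∑ j ∈ range (n + 1), k (n - j) * f (x j))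
    {u : ℕ → ℝ} (hu : Tendsto u atTop atTop) (hM : runMax0 (|x ·|) =O[atTop] u) :
    (x - H) =o[atTop] u := by
  refine isLittleO_of_forall_le_mul_add (tendsto_norm_atTop_atTop.comp hu) fun ε hε => ?_
  obtain ⟨c, hc, hMc⟩ := hM.exists_pos
  set K := ∑' j, |k j|
  have hK : 0 ≤ K := tsum_nonneg fun _ => abs_nonneg _
  set ε' := ε / (c * (K + 1))
  have hε' : 0 < ε' := by positivity
  have hKε' : K * ε' * c ≤ ε :=
    calc K * ε' * c = K / (K + 1) * ε := by simp only [ε']; field_simp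
      _ ≤ 1 * ε := by gcongr; exact (div_le_one (by positivity)).mpr (by linarith)
      _ = ε := one_mul ε
  obtain ⟨C, hC⟩ := exists_abs_le_mul_abs_add hf hsub hε'
  refine ⟨K * C, ?_⟩
  rw [← map_add_atTop_eq_nat 1, eventually_map]
  filter_upwards [(tendsto_add_atTop_nat 1).eventually hMc.bound] with n hn
  rw [Real.norm_of_nonneg (runMax0_abs_nonneg x _), Real.norm_eq_abs] at hn
  have hstep : |x (n + 1) - H (n + 1)| ≤ K * (ε' * runMax0 (|x ·|) n + C) :=
    abs_sub_forcing_le hk hx hε'.le hC n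
  have hmono := runMax0_mono (|x ·|) n.le_succ
  rw [Pi.sub_apply, Real.norm_eq_abs, Real.norm_eq_abs]
  calc |x (n + 1) - H (n + 1)| ≤ K * (ε' * runMax0 (|x ·|) (n + 1) + C) := by
        refine hstep.trans ?_; gcongr
    _ ≤ K * ε' * c * |u (n + 1)| + K * C := by
        rw [mul_add, mul_assoc K ε' c, mul_assoc K, mul_assoc ε']; gcongr
    _ ≤ ε * |u (n + 1)| + K * C := by gcongr

theorem isEquivalent_forcing_of_forcing (hf : Continuous f)
    (hsub : Tendsto (fun y => f y / y) (cocompact ℝ) (𝓝 0)) (hk : Summable fun j => |k j|)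
    (hx : ∀ n : ℕ, x (n + 1) = H (n + 1) + ∑ j ∈ range (n + 1), k (n - j) * f (x j))
    (hH : Tendsto H atTop atTop ∧ AsymptoticToMonotone H) : x ~[atTop] H := by
  obtain ⟨hHtop, b, hb, hHb⟩ := hH
  obtain ⟨D, hD⟩ := exists_runMax0_abs_le hf hsub hk hx
  have hMH := isBigO_runMax0_abs hb (isEquivalent_of_tendsto_one hHb) hHtop
  have hMx : runMax0 (|x ·|) =O[atTop] fun n => D + 2 * runMax0 (|H ·|) n :=
    IsBigO.of_bound' <| Eventually.of_forall fun n => by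
      rw [Real.norm_of_nonneg (runMax0_abs_nonneg x n), Real.norm_eq_abs]
      exact (hD n).trans (le_abs_self _)
  exact isLittleO_sub_forcing hf hsub hk hx hHtop <| hMx.trans <|
    (isLittleO_const_left.2 (Or.inr (tendsto_norm_atTop_atTop.comp hHtop))).isBigO.add
      (hMH.const_mul_left 2)

theorem isEquivalent_forcing_of_solution (hf : Continuous f)
    (hsub : Tendsto (fun y => f y / y) (cocompact ℝ) (𝓝 0)) (hk : Summable fun j => |k j|)
    (hx : ∀ n : ℕ, x (n + 1) = H (n + 1) + ∑ j ∈ range (n + 1), k (n - j) * f (x j))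
    (hX : Tendsto x atTop atTop ∧ AsymptoticToMonotone x) : x ~[atTop] H := by
  obtain ⟨hxtop, b, hb, hxb⟩ := hX
  have ho := isLittleO_sub_forcing hf hsub hk hx hxtop
    (isBigO_runMax0_abs hb (isEquivalent_of_tendsto_one hxb) hxtop)
  exact (ho.neg_left.congr_left fun n => by simp).isEquivalent.symm

end Volterra

theorem stmt8_general
(f : ℝ → ℝ) (k H x : ℕ → ℝ)
    (hf : Continuous f)
    (hsub : Filter.Tendsto (fun y => f y / y) (Filter.cocompact ℝ) (nhds 0))
    (hk : Summable (fun j => |k j|))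
    (hx : ∀ n : ℕ, x (n + 1) = H (n + 1) + ∑ j ∈ Finset.range (n + 1), k (n - j) * f (x j)) :
    ((Filter.Tendsto H Filter.atTop Filter.atTop ∧
        ∃ b : ℕ → ℝ, Monotone b ∧ Filter.Tendsto (fun n => H n / b n) Filter.atTop (nhds 1)) ↔
      (Filter.Tendsto x Filter.atTop Filter.atTop ∧
        ∃ b : ℕ → ℝ, Monotone b ∧ Filter.Tendsto (fun n => x n / b n) Filter.atTop (nhds 1))) ∧
    ((Filter.Tendsto H Filter.atTop Filter.atTop ∧
        ∃ b : ℕ → ℝ, Monotone b ∧ Filter.Tendsto (fun n => H n / b n) Filter.atTop (nhds 1)) →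
      Filter.Tendsto (fun n => x n / H n) Filter.atTop (nhds 1)) := by
  have of_forcing := isEquivalent_forcing_of_forcing hf hsub hk hx
  have of_solution := isEquivalent_forcing_of_solution hf hsub hk hx
  refine ⟨⟨fun hH => (of_forcing hH).symm.tendsto_atTop_and_asymptoticToMonotone hH,
    fun hX => (of_solution hX).tendsto_atTop_and_asymptoticToMonotone hX⟩, fun hH => ?_⟩
  have hH0 : ∀ᶠ n in atTop, H n ≠ 0 := (hH.1.eventually_gt_atTop 0).mono fun _ h => h.ne'
  exact (isEquivalent_iff_tendsto_one hH0).mp (of_forcing hH)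

theorem stmt8
(f : ℝ → ℝ) (k H x : ℕ → ℝ) (ξ : ℝ)
    (hf : Continuous f)
    (hsub : Filter.Tendsto (fun y => f y / y) (Filter.cocompact ℝ) (nhds 0))
    (hk : Summable (fun j => |k j|))
    (hx0 : x 0 = ξ)
    (hx : ∀ n : ℕ, x (n + 1) = H (n + 1) + ∑ j ∈ Finset.range (n + 1), k (n - j) * f (x j)) :
    ((Filter.Tendsto H Filter.atTop Filter.atTop ∧
        ∃ b : ℕ → ℝ, Monotone b ∧ Filter.Tendsto (fun n => H n / b n) Filter.atTop (nhds 1)) ↔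
      (Filter.Tendsto x Filter.atTop Filter.atTop ∧
        ∃ b : ℕ → ℝ, Monotone b ∧ Filter.Tendsto (fun n => x n / b n) Filter.atTop (nhds 1))) ∧
    ((Filter.Tendsto H Filter.atTop Filter.atTop ∧
        ∃ b : ℕ → ℝ, Monotone b ∧ Filter.Tendsto (fun n => H n / b n) Filter.atTop (nhds 1)) →
      Filter.Tendsto (fun n => x n / H n) Filter.atTop (nhds 1)) :=
  stmt8_general f k H x hf hsub hk hx
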